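/- Let G be a finite simple graph with a linear order on its vertex set, let A be the adjacency matrix (over the reals) of the symmetric lift HL'₂(G), and for each edge e of G oriented as (u,v) with u < v, let f_e be the real vector indexed by the vertices of HL'₂(G) whose entry at (u,v) is +1, whose entry at (v,u) is −1, and which is 0 elsewhere. Then for all edges e and e' of G, f_eᵀ A f_{e'} = 2 · M(G)_{e,e'}, where M(G) is the signed overlap matrix of G. In other words, the matrix M(G) represents the adjacency operator of HL'₂(G) restricted to the subspace of vectors g satisfying g(u,v) = −g(v,u). -/

import Mathlib

/-!
Write `e⁺ = (u, v)` and `e⁻ = (v, u)` for an oriented edge `e = (u, v)`, so that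
`f_e = δ_{e⁺} - δ_{e⁻}` and the form `f_eᵀ A f_{e'}` expands into four adjacency entries.
Reversing both coordinates is an automorphism of `HL'₂(G)`, hence `A(e⁻, e'⁻) = A(e⁺, e'⁺)` and
`A(e⁻, e'⁺) = A(e⁺, e'⁻)`, and the form equals `2 (A(e⁺, e'⁺) - A(e⁺, e'⁻))`. The first entry
detects a shared tail or head, the second a head meeting a tail; since `u < v` and `x < y`,
the two cannot happen at once, which is exactly the case distinction defining `M(G)`.
-/

open SimpleGraph

/-- The symmetric lift `HL'₂(G)`: vertices are ordered pairs `(u,v)` with `{u,v}` an edge of `G`;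
distinct vertices `(u,v)` and `(x,y)` are adjacent iff `u = x` or `v = y`. -/
def symLift {V : Type*} (G : SimpleGraph V) : SimpleGraph {p : V × V // G.Adj p.1 p.2} where
  Adj a b := a ≠ b ∧ (a.val.1 = b.val.1 ∨ a.val.2 = b.val.2)
  symm := ⟨fun _ _ h => ⟨h.1.symm, h.2.imp Eq.symm Eq.symm⟩⟩
  loopless := ⟨fun _ h => h.1 rfl⟩
open scoped Classical in
/-- The signed overlap matrix `M(G)` over `ℝ`. -/
noncomputable def signedOverlap {V : Type*} (G : SimpleGraph V) (r : LinearOrder V) :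
    Matrix {p : V × V // r.lt p.1 p.2 ∧ G.Adj p.1 p.2}
      {p : V × V // r.lt p.1 p.2 ∧ G.Adj p.1 p.2} ℝ :=
  fun e f =>
    if e = f then 0
    else if e.val.1 = f.val.1 ∨ e.val.2 = f.val.2 then 1
    else if e.val.1 = f.val.2 ∨ e.val.2 = f.val.1 then -1
    else 0

open scoped Classical in
/-- The antisymmetric test vector `f_e` attached to an oriented edge `e = (u,v)` (with `u < v`):
`+1` at the vertex `(u,v)` of the symmetric lift, `-1` at `(v,u)`, and `0` elsewhere. -/
noncomputable def fVec {V : Type*} (G : SimpleGraph V) (r : LinearOrder V)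
    (e : {p : V × V // r.lt p.1 p.2 ∧ G.Adj p.1 p.2}) :
    {p : V × V // G.Adj p.1 p.2} → ℝ :=
  fun a =>
    if a.val = e.val then 1
    else if a.val = (e.val.2, e.val.1) then -1
    else 0

namespace Matrix

variable {n R : Type*} [Fintype n] [DecidableEq n] [NonAssocRing R]

theorem single_sub_single_dotProduct_mulVec (A : Matrix n n R) (a b c d : n) :
    (Pi.single a 1 - Pi.single b 1) ⬝ᵥ A *ᵥ (Pi.single c 1 - Pi.single d 1) =
      A a c - A a d - (A b c - A b d) := by
  simp only [mulVec_sub, sub_dotProduct, single_one_dotProduct, Pi.sub_apply, mulVec_single_one,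
    col_apply]

end Matrix

section SymLift

variable {V : Type*} {G : SimpleGraph V}

theorem symLift_adj_iff {a b : {p : V × V // G.Adj p.1 p.2}} :
    (symLift G).Adj a b ↔ a ≠ b ∧ (a.val.1 = b.val.1 ∨ a.val.2 = b.val.2) :=
  Iff.rfl

def symLiftReverse : symLift G ≃g symLift G where
  toFun a := ⟨a.val.swap, a.prop.symm⟩
  invFun a := ⟨a.val.swap, a.prop.symm⟩
  left_inv _ := rfl
  right_inv _ := rfl
  map_rel_iff' {a b} := by
    simp only [symLift_adj_iff, Equiv.coe_fn_mk, ne_eq, Subtype.ext_iff, Prod.swap_inj,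
      Prod.fst_swap, Prod.snd_swap, or_comm]

@[simp]
theorem symLiftReverse_apply_coe (a : {p : V × V // G.Adj p.1 p.2}) :
    (symLiftReverse a).val = a.val.swap :=
  rfl

variable (G) (r : LinearOrder V)

def orientedToLift (e : {p : V × V // r.lt p.1 p.2 ∧ G.Adj p.1 p.2}) :
    {p : V × V // G.Adj p.1 p.2} :=
  ⟨e.val, e.prop.2⟩

open scoped Classical in
theorem fVec_eq_single_sub_single (e : {p : V × V // r.lt p.1 p.2 ∧ G.Adj p.1 p.2}) :
    fVec G r e = Pi.single (orientedToLift G r e) 1 -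
      Pi.single (symLiftReverse (orientedToLift G r e)) 1 := by
  obtain ⟨⟨u, v⟩, huv, -⟩ := e
  have hne : (u, v) ≠ (v, u) := by simp [huv.ne]
  ext a
  simp only [fVec, Pi.sub_apply, Pi.single_apply, orientedToLift, Subtype.ext_iff,
    symLiftReverse_apply_coe, Prod.swap_prod_mk]
  split_ifs <;> simp_all

@[simp]
theorem symLiftReverse_symLiftReverse (a : {p : V × V // G.Adj p.1 p.2}) :
    symLiftReverse (symLiftReverse a) = a :=
  rfl

theorem symLift_adjMatrix_reverse_left {R : Type*} [Zero R] [One R]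
    [DecidableRel (symLift G).Adj] (a b : {p : V × V // G.Adj p.1 p.2}) :
    (symLift G).adjMatrix R (symLiftReverse a) b =
      (symLift G).adjMatrix R a (symLiftReverse b) := by
  simp only [adjMatrix_apply]
  exact if_congr (symLiftReverse.map_adj_iff :
    (symLift G).Adj (symLiftReverse a) (symLiftReverse (symLiftReverse b)) ↔ _) rfl rfl

theorem symLift_adj_orientedToLift {e e' : {p : V × V // r.lt p.1 p.2 ∧ G.Adj p.1 p.2}} :
    (symLift G).Adj (orientedToLift G r e) (orientedToLift G r e') ↔
      e ≠ e' ∧ (e.val.1 = e'.val.1 ∨ e.val.2 = e'.val.2) := by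
  simp [symLift_adj_iff, orientedToLift, Subtype.ext_iff]

theorem symLift_adj_orientedToLift_reverse {e e' : {p : V × V // r.lt p.1 p.2 ∧ G.Adj p.1 p.2}} :
    (symLift G).Adj (orientedToLift G r e) (symLiftReverse (orientedToLift G r e')) ↔
      e.val.1 = e'.val.2 ∨ e.val.2 = e'.val.1 := by
  obtain ⟨⟨u, v⟩, huv, -⟩ := e
  obtain ⟨⟨x, y⟩, hxy, -⟩ := e'
  have hne : ¬(u = y ∧ v = x) := by
    rintro ⟨rfl, rfl⟩
    exact lt_asymm huv hxy
  simp [symLift_adj_iff, orientedToLift, Subtype.ext_iff, hne]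

open scoped Classical in
theorem signedOverlap_eq (e e' : {p : V × V // r.lt p.1 p.2 ∧ G.Adj p.1 p.2}) :
    signedOverlap G r e e' =
      (if e ≠ e' ∧ (e.val.1 = e'.val.1 ∨ e.val.2 = e'.val.2) then 1 else 0) -
        (if e.val.1 = e'.val.2 ∨ e.val.2 = e'.val.1 then 1 else 0) := by
  obtain ⟨⟨u, v⟩, huv, -⟩ := e
  obtain ⟨⟨x, y⟩, hxy, -⟩ := e'
  have hdisj : (u = x ∨ v = y) → ¬(u = y ∨ v = x) := by
    rintro (rfl | rfl) (rfl | rfl) <;> simp_all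
  simp only [signedOverlap]
  split_ifs <;> simp_all

end SymLift

open Matrix in
open scoped Classical in
/-- `f_eᵀ A f_{e'} = 2 M(G)_{e,e'}`: the signed overlap matrix represents the adjacency
operator of the symmetric lift restricted to the antisymmetric subspace. -/
theorem stmt_17 {V : Type*} [Fintype V] (G : SimpleGraph V) (r : LinearOrder V) :
    ∀ e e' : {p : V × V // r.lt p.1 p.2 ∧ G.Adj p.1 p.2},
      fVec G r e ⬝ᵥ ((symLift G).adjMatrix ℝ) *ᵥ fVec G r e' =
        2 * signedOverlap G r e e' := by
  intro e e'
  rw [fVec_eq_single_sub_single, fVec_eq_single_sub_single, single_sub_single_dotProduct_mulVec,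
    symLift_adjMatrix_reverse_left, symLift_adjMatrix_reverse_left, symLiftReverse_symLiftReverse]
  simp only [adjMatrix_apply, symLift_adj_orientedToLift, symLift_adj_orientedToLift_reverse,
    signedOverlap_eq]
  ring
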